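/- Let T be a tree (with no isolated vertices), let v be a vertex of T, and suppose mttr(v, T) = t. Then for every i with 1 ≤ i ≤ t, there exists a modified-total transitive partition {V_1, V_2, ..., V_i} of T of size i such that v ∈ V_i. -/

import Mathlib

/-- A modified-total transitive partition of `G` into `k` parts: the parts are nonempty,
they partition the vertex set, and `V_i` m-totally dominates `V_j` for all `i < j`
(i.e. every vertex of `V_i ∪ V_j` is adjacent to some vertex of `V_i`). -/
def MTTPartition {V : Type*} (G : SimpleGraph V) (k : ℕ) (P : Fin k → Set V) : Prop :=
  (∀ i, (P i).Nonempty) ∧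
  (∀ v : V, ∃! i, v ∈ P i) ∧
  (∀ i j : Fin k, i < j → ∀ v ∈ P i ∪ P j, ∃ u ∈ P i, G.Adj u v)

/-!
Merging the parts `V_i, …, V_k` of a modified-total transitive partition into one part
yields a modified-total transitive partition of size `i`: each `V_a` with `a < i` still
dominates the merged part, since it dominates every later part, and the merged part itself
never has to dominate anything. A vertex of `V_t` with `t ≥ i` lands in the merged part.
-/

namespace MTTPartition

variable {V : Type*} {G : SimpleGraph V} {k : ℕ} {P : Fin k → Set V}

/-- The `i` parts obtained by merging the parts of index `≥ i - 1` (0-based) into the last one. -/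
def mergeTail (P : Fin k → Set V) (i : ℕ) (m : Fin i) : Set V :=
  {w | ∃ c : Fin k, min (c : ℕ) (i - 1) = m ∧ w ∈ P c}

theorem exists_adj_of_le (h : MTTPartition G k P) {a c : Fin k} (ha : (a : ℕ) + 1 < k)
    (hac : a ≤ c) {w : V} (hw : w ∈ P c) : ∃ u ∈ P a, G.Adj u w := by
  obtain rfl | hlt := hac.eq_or_lt
  · exact h.2.2 a ⟨a + 1, ha⟩ (Fin.lt_def.2 (Nat.lt_succ_self a)) w (Or.inl hw)
  · exact h.2.2 a c hlt w (Or.inr hw)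

theorem mergeTail_of_le (h : MTTPartition G k P) {i : ℕ} (hi : 1 ≤ i) (hik : i ≤ k) :
    MTTPartition G i (mergeTail P i) := by
  refine ⟨fun m => ?_, fun w => ?_, fun a b hab w hw => ?_⟩
  · obtain ⟨w, hw⟩ := h.1 ⟨m, by omega⟩
    exact ⟨w, ⟨m, by omega⟩, by simp only; omega, hw⟩
  · obtain ⟨c, hc, hcu⟩ := h.2.1 w
    refine ⟨⟨min c (i - 1), by omega⟩, ⟨c, rfl, hc⟩, ?_⟩
    rintro m ⟨c', hc', hwc'⟩
    obtain rfl := hcu c' hwc'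
    exact Fin.ext hc'.symm
  · have hai : (a : ℕ) < i - 1 := by have := b.isLt; rw [Fin.lt_def] at hab; omega
    obtain ⟨c, hac, hwc⟩ : ∃ c : Fin k, (a : ℕ) ≤ c ∧ w ∈ P c := by
      rcases hw with ⟨c, hc, hwc⟩ | ⟨c, hc, hwc⟩ <;> exact ⟨c, by omega, hwc⟩
    obtain ⟨u, hu, hadj⟩ :=
      h.exists_adj_of_le (a := ⟨a, by omega⟩) (by simp only; omega) (Fin.le_def.2 hac) hwc
    exact ⟨u, ⟨⟨a, by omega⟩, by simp only; omega, hu⟩, hadj⟩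

theorem mem_mergeTail_last {i : ℕ} (hi : 1 ≤ i) {c : Fin k} (hc : i - 1 ≤ c) {w : V}
    (hw : w ∈ P c) : w ∈ mergeTail P i ⟨i - 1, by omega⟩ :=
  ⟨c, min_eq_right hc, hw⟩

end MTTPartition

/-- If `T` is a tree, `v` a vertex of `T`, and the modified-total transitive number of
`v` in `T` is `t` (the largest `p` such that `v ∈ V_p` in some modified-total transitive
partition of `T`), then for every `1 ≤ i ≤ t` there is a modified-total transitive
partition `{V_1, …, V_i}` of `T` of size `i` with `v ∈ V_i`. -/
theorem stmt19 {V : Type*} (T : SimpleGraph V)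
    (v : V) (t : ℕ)
    (ht : IsGreatest {p : ℕ | ∃ k : ℕ, ∃ P : Fin k → Set V, MTTPartition T k P ∧
            ∃ i : Fin k, (i : ℕ) + 1 = p ∧ v ∈ P i} t) :
    ∀ i : ℕ, ∀ hi1 : 1 ≤ i, i ≤ t →
      ∃ P : Fin i → Set V, MTTPartition T i P ∧ v ∈ P ⟨i - 1, by omega⟩ := by
  intro i hi1 hit
  obtain ⟨⟨k, P, hP, j, rfl, hvj⟩, -⟩ := ht
  exact ⟨_, hP.mergeTail_of_le hi1 (by omega), MTTPartition.mem_mergeTail_last hi1 (by omega) hvj⟩
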